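/- arXiv:2503.12397 — 2 statements merged into one kernel-verified Lean document; each statement's English description precedes it below -/
import Mathlib

section
/- For all integers n, m with 0 < m < n, the polynomials ψ_{n,r}^⊥, r = n,…,3n−1, are pairwise orthogonal with respect to the Chebyshev weight, with ⟨ψ_{n,r}^⊥, ψ_{n,s}^⊥⟩ = δ_{r,s}·v_{n,r}^m for all r, s = n,…,3n−1, where v_{n,r}^m = (m² + (n−r)²)/(2m²) if n < r < n+m, v_{n,r}^m = 1 if r = n or n+m ≤ r ≤ 3n−m, and v_{n,r}^m = (m² + (3n−r)²)/(2m²) if 3n−m < r < 3n. -/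
open Real MeasureTheory Finset

/-- Chebyshev nodes of the first kind: `x_k^n = cos((2k-1)π/(2n))`. -/
noncomputable def chebNode (n k : ℕ) : ℝ :=
  Real.cos ((2 * (k : ℝ) - 1) * Real.pi / (2 * (n : ℝ)))

/-- Orthonormal Chebyshev polynomials of the first kind. -/
noncomputable def chebP (r : ℕ) (x : ℝ) : ℝ :=
  if r = 0 then Real.sqrt (1 / Real.pi)
  else Real.sqrt (2 / Real.pi) * Real.cos ((r : ℝ) * Real.arccos x)

/-- Darboux kernel `K_r(x,y) = Σ_{s=0}^r p_s(x) p_s(y)`. -/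
noncomputable def darboux (r : ℕ) (x y : ℝ) : ℝ :=
  ∑ s ∈ Finset.range (r + 1), chebP s x * chebP s y

/-- de la Vallée Poussin kernel `v_n^m(x,y) = (1/(2m)) Σ_{r=n-m}^{n+m-1} K_r(x,y)`. -/
noncomputable def vpK (n m : ℕ) (x y : ℝ) : ℝ :=
  (1 / (2 * (m : ℝ))) * ∑ r ∈ Finset.Icc (n - m) (n + m - 1), darboux r x y

/-- The Chebyshev weight `w(x) = 1/√(1-x²)`. -/
noncomputable def chebW (x : ℝ) : ℝ := 1 / Real.sqrt (1 - x ^ 2)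

/-- Scaling functions `Φ_{n,k}^m(x) = (π/n) v_n^m(x_k^n, x)`. -/
noncomputable def scal (n m k : ℕ) (x : ℝ) : ℝ :=
  (Real.pi / (n : ℝ)) * vpK n m (chebNode n k) x

/-- The nodes `y_k^n`, `k = 1,…,2n`: the Chebyshev nodes of order `3n` not of order `n`. -/
noncomputable def yNode (n k : ℕ) : ℝ := chebNode (3 * n) (3 * k / 2)

/-- Wavelet functions `ψ_{n,k}^m`. -/
noncomputable def wav (n m k : ℕ) (x : ℝ) : ℝ :=
  (Real.pi / (3 * (n : ℝ))) * vpK (3 * n) m (yNode n k) x -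
    ∑ h ∈ Finset.Icc 1 n,
      scal n m h (yNode n k) * ((Real.pi / (3 * (n : ℝ))) * vpK (3 * n) m (chebNode n h) x)

/-- Filter coefficients `μ_{n,r}^m`. -/
noncomputable def muC (n m r : ℕ) : ℝ :=
  if r ≤ n - m then 1
  else if r < n + m then ((m : ℝ) + (n : ℝ) - (r : ℝ)) / (2 * (m : ℝ))
  else 0

/-- Squared norms `ν_{n,r}^m` of the orthogonal scaling basis. -/
noncomputable def nuC (n m r : ℕ) : ℝ :=
  if r ≤ n - m then 1 else ((m : ℝ) ^ 2 + ((n : ℝ) - (r : ℝ)) ^ 2) / (2 * (m : ℝ) ^ 2)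

/-- Orthogonal scaling basis `Φ_{n,r}^⊥`. -/
noncomputable def scalPerp (n m r : ℕ) (x : ℝ) : ℝ :=
  if r ≤ n - m then chebP r x
  else muC n m r * chebP r x - muC n m (2 * n - r) * chebP (2 * n - r) x

/-- The sup norm on `[-1,1]`. -/
noncomputable def supNorm (f : ℝ → ℝ) : ℝ := ⨆ x : Set.Icc (-1 : ℝ) 1, |f x|

/-- The Lebesgue constant `c_∞ = max_{|x|≤1} ∫_{-1}^1 |v_n^m(x,y)| w(y) dy`. -/
noncomputable def cInf (n m : ℕ) : ℝ :=
  ⨆ x : Set.Icc (-1 : ℝ) 1, ∫ y in (-1 : ℝ)..1, |vpK n m x y| * chebW y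


/-- Orthogonal wavelet basis polynomials `ψ_{n,r}^⊥`, `r = n,…,3n−1`. -/
noncomputable def wavPerp (n m r : ℕ) (x : ℝ) : ℝ :=
  if r < n + m then muC n m r * chebP (2 * n - r) x + muC n m (2 * n - r) * chebP r x
  else if r ≤ 3 * n - m then chebP r x
  else muC (3 * n) m r * chebP r x - muC (3 * n) m (6 * n - r) * chebP (6 * n - r) x

/-- Squared norms `v_{n,r}^m` of the orthogonal wavelet basis. -/
noncomputable def wavNuC (n m r : ℕ) : ℝ :=
  if r = n then 1
  else if r < n + m then ((m : ℝ) ^ 2 + ((n : ℝ) - (r : ℝ)) ^ 2) / (2 * (m : ℝ) ^ 2)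
  else if r ≤ 3 * n - m then 1
  else ((m : ℝ) ^ 2 + (3 * (n : ℝ) - (r : ℝ)) ^ 2) / (2 * (m : ℝ) ^ 2)

open intervalIntegral in
lemma myIntegralCos (a b : ℝ) : ∫ x in a..b, Real.cos x = Real.sin b - Real.sin a :=
  integral_cos

open intervalIntegral in
lemma myConstMul (a b c : ℝ) (f : ℝ → ℝ) :
    ∫ x in a..b, c * f x = c * ∫ x in a..b, f x := integral_const_mul c f

open intervalIntegral in
lemma myAdd {f g : ℝ → ℝ} {a b : ℝ} (hf : IntervalIntegrable f volume a b)
    (hg : IntervalIntegrable g volume a b) :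
    ∫ x in a..b, (f x + g x) = (∫ x in a..b, f x) + ∫ x in a..b, g x := integral_add hf hg

lemma integral_cos_kpi (k : ℤ) :
    ∫ θ in (0:ℝ)..π, Real.cos (k * θ) = if k = 0 then π else 0 := by
  rcases eq_or_ne k 0 with hk | hk
  · simp [hk]
  · rw [if_neg hk]
    have hk' : (k:ℝ) ≠ 0 := Int.cast_ne_zero.mpr hk
    open intervalIntegral in
    have h := mul_integral_comp_mul_left (a := (0:ℝ)) (b := π)
      (f := Real.cos) (c := (k:ℝ))
    rw [myIntegralCos] at h
    have hs : Real.sin ((k:ℝ) * π) = 0 := Real.sin_int_mul_pi k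
    rw [mul_zero, hs, Real.sin_zero, sub_zero] at h
    exact (mul_eq_zero.mp h).resolve_left hk'

lemma cos_orth' (a b : ℕ) :
    ∫ θ in (0:ℝ)..π, Real.cos ((a:ℝ) * θ) * Real.cos ((b:ℝ) * θ) =
      if a = b then (if a = 0 then π else π / 2) else 0 := by
  have key : ∀ θ : ℝ, Real.cos ((a:ℝ) * θ) * Real.cos ((b:ℝ) * θ) =
      (Real.cos ((((a:ℤ) - b : ℤ):ℝ) * θ) + Real.cos ((((a:ℤ) + b : ℤ):ℝ) * θ)) / 2 := by
    intro θ
    push_cast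
    rw [sub_mul, add_mul, Real.cos_sub, Real.cos_add]
    ring
  simp_rw [key]
  have i1 : IntervalIntegrable (fun θ => Real.cos ((((a:ℤ) - b : ℤ):ℝ) * θ)) volume 0 π :=
    (Real.continuous_cos.comp (continuous_const.mul continuous_id)).intervalIntegrable _ _
  have i2 : IntervalIntegrable (fun θ => Real.cos ((((a:ℤ) + b : ℤ):ℝ) * θ)) volume 0 π :=
    (Real.continuous_cos.comp (continuous_const.mul continuous_id)).intervalIntegrable _ _
  rw [intervalIntegral.integral_div, myAdd i1 i2, integral_cos_kpi, integral_cos_kpi]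
  rcases eq_or_ne a b with h | h
  · subst h
    rcases eq_or_ne a 0 with h0 | h0
    · simp [h0]
    · have h2 : ((a:ℤ) + a) ≠ 0 := by omega
      have h1 : ((a:ℤ) - a) = 0 := by omega
      simp only [h1, h2, if_pos rfl, if_neg h0, ite_false, ite_true]
      simp
  · have h1 : ((a:ℤ) - b) ≠ 0 := by omega
    have h2 : ((a:ℤ) + b) ≠ 0 := by omega
    simp [h1, h2, h]

noncomputable def cc (r : ℕ) (θ : ℝ) : ℝ :=
  if r = 0 then Real.sqrt (1 / π) else Real.sqrt (2 / π) * Real.cos ((r:ℝ) * θ)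

lemma cc_cont (r : ℕ) : Continuous (cc r) := by
  unfold cc
  split
  · exact continuous_const
  · exact continuous_const.mul (Real.continuous_cos.comp (continuous_const.mul continuous_id))

lemma cos_image_Ioo : Real.cos '' Set.Ioo 0 π = Set.Ioo (-1:ℝ) 1 := by
  ext y
  constructor
  · rintro ⟨θ, ⟨h0, hπ⟩, rfl⟩
    have hmem : θ ∈ Set.Icc (0:ℝ) π := ⟨h0.le, hπ.le⟩
    constructor
    · have := Real.strictAntiOn_cos hmem (Set.right_mem_Icc.2 Real.pi_pos.le) hπ
      simpa using this
    · have := Real.strictAntiOn_cos (Set.left_mem_Icc.2 Real.pi_pos.le) hmem h0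
      simpa using this
  · rintro ⟨h1, h2⟩
    refine ⟨Real.arccos y, ⟨?_, ?_⟩, Real.cos_arccos h1.le h2.le⟩
    · exact Real.arccos_pos.2 h2
    · rcases lt_or_eq_of_le (Real.arccos_le_pi y) with h | h
      · exact h
      · exfalso
        have hc : Real.cos (Real.arccos y) = -1 := by rw [h, Real.cos_pi]
        rw [Real.cos_arccos h1.le h2.le] at hc
        linarith

noncomputable def cFac (r : ℕ) : ℝ := if r = 0 then Real.sqrt (1/π) else Real.sqrt (2/π)

lemma cc_eq (r : ℕ) (θ : ℝ) : cc r θ = cFac r * Real.cos ((r:ℝ) * θ) := by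
  unfold cc cFac
  by_cases h : r = 0 <;> simp [h]

lemma cc_orth (r s : ℕ) : ∫ θ in (0:ℝ)..π, cc r θ * cc s θ = if r = s then 1 else 0 := by
  have h : ∀ θ : ℝ, cc r θ * cc s θ =
      (cFac r * cFac s) * (Real.cos ((r:ℝ) * θ) * Real.cos ((s:ℝ) * θ)) := by
    intro θ; rw [cc_eq, cc_eq]; ring
  simp_rw [h]
  rw [myConstMul, cos_orth']
  rcases eq_or_ne r s with hrs | hrs
  · subst hrs
    rw [if_pos rfl, if_pos rfl]
    rcases eq_or_ne r 0 with h0 | h0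
    · unfold cFac
      simp only [if_pos h0]
      rw [Real.mul_self_sqrt (by positivity)]
      field_simp
    · unfold cFac
      simp only [if_neg h0]
      rw [Real.mul_self_sqrt (by positivity)]
      field_simp
  · simp [hrs]

lemma key_eqOn (r s : ℕ) :
    Set.EqOn
      (fun θ => |(-Real.sin θ)| •
        (chebP r (Real.cos θ) * chebP s (Real.cos θ) * chebW (Real.cos θ)))
      (fun θ => cc r θ * cc s θ) (Set.Ioo 0 π) := by
  rintro θ ⟨h0, hπ⟩
  have hsin : 0 < Real.sin θ := Real.sin_pos_of_pos_of_lt_pi h0 hπ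
  have hcp : ∀ t : ℕ, chebP t (Real.cos θ) = cc t θ := by
    intro t; unfold chebP cc; rw [Real.arccos_cos h0.le hπ.le]
  have hw : chebW (Real.cos θ) = 1 / Real.sin θ := by
    unfold chebW
    rw [show (1 : ℝ) - Real.cos θ ^ 2 = Real.sin θ ^ 2 by rw [Real.sin_sq],
      Real.sqrt_sq hsin.le]
  simp only [smul_eq_mul, hcp, hw, abs_neg, abs_of_pos hsin]
  field_simp

lemma cheb_setIntegral (r s : ℕ) :
    ∫ x in Set.Ioo (-1:ℝ) 1, chebP r x * chebP s x * chebW x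
      = ∫ θ in Set.Ioo (0:ℝ) π, cc r θ * cc s θ := by
  rw [← cos_image_Ioo,
    integral_image_eq_integral_abs_deriv_smul measurableSet_Ioo
      (fun θ _ => (Real.hasDerivAt_cos θ).hasDerivWithinAt)
      (Real.strictAntiOn_cos.injOn.mono Set.Ioo_subset_Icc_self)]
  exact setIntegral_congr_fun measurableSet_Ioo (key_eqOn r s)

lemma cheb_integrableOn (r s : ℕ) :
    IntegrableOn (fun x => chebP r x * chebP s x * chebW x) (Set.Ioo (-1:ℝ) 1) := by
  rw [← cos_image_Ioo,
    integrableOn_image_iff_integrableOn_abs_deriv_smul measurableSet_Ioo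
      (fun θ _ => (Real.hasDerivAt_cos θ).hasDerivWithinAt)
      (Real.strictAntiOn_cos.injOn.mono Set.Ioo_subset_Icc_self)]
  have hint : IntegrableOn (fun θ => cc r θ * cc s θ) (Set.Ioo (0:ℝ) π) :=
    (((cc_cont r).mul (cc_cont s)).continuousOn.integrableOn_compact
      isCompact_Icc).mono_set Set.Ioo_subset_Icc_self
  exact hint.congr_fun (key_eqOn r s).symm measurableSet_Ioo

lemma cheb_intervalIntegrable (r s : ℕ) :
    IntervalIntegrable (fun x => chebP r x * chebP s x * chebW x) volume (-1) 1 :=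
  (intervalIntegrable_iff_integrableOn_Ioo_of_le (by norm_num)).2 (cheb_integrableOn r s)

lemma chebP_orth (r s : ℕ) :
    ∫ x in (-1:ℝ)..1, chebP r x * chebP s x * chebW x = if r = s then 1 else 0 := by
  rw [intervalIntegral.integral_of_le (by norm_num : (-1:ℝ) ≤ 1),
    integral_Ioc_eq_integral_Ioo, cheb_setIntegral, ← integral_Ioc_eq_integral_Ioo,
    ← intervalIntegral.integral_of_le Real.pi_pos.le, cc_orth]

lemma integral_comb (a b c d : ℝ) (i j k l : ℕ) :
    ∫ x in (-1:ℝ)..1,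
        (a * chebP i x + b * chebP j x) * (c * chebP k x + d * chebP l x) * chebW x
      = a * c * (if i = k then 1 else 0) + a * d * (if i = l then 1 else 0)
        + b * c * (if j = k then 1 else 0) + b * d * (if j = l then 1 else 0) := by
  have h : ∀ x : ℝ,
      (a * chebP i x + b * chebP j x) * (c * chebP k x + d * chebP l x) * chebW x
      = a * c * (chebP i x * chebP k x * chebW x) + a * d * (chebP i x * chebP l x * chebW x)
        + (b * c * (chebP j x * chebP k x * chebW x)
        + b * d * (chebP j x * chebP l x * chebW x)) := by
    intro x; ring
  simp_rw [h]
  have Iik := (cheb_intervalIntegrable i k).const_mul (a * c)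
  have Iil := (cheb_intervalIntegrable i l).const_mul (a * d)
  have Ijk := (cheb_intervalIntegrable j k).const_mul (b * c)
  have Ijl := (cheb_intervalIntegrable j l).const_mul (b * d)
  rw [myAdd (Iik.add Iil) (Ijk.add Ijl), myAdd Iik Iil, myAdd Ijk Ijl,
    myConstMul, myConstMul, myConstMul, myConstMul,
    chebP_orth, chebP_orth, chebP_orth, chebP_orth]
  ring

noncomputable def wA (n m r : ℕ) : ℝ :=
  if r < n + m then muC n m r else if r ≤ 3 * n - m then 1 else muC (3 * n) m r

noncomputable def wB (n m r : ℕ) : ℝ :=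
  if r < n + m then muC n m (2 * n - r)
  else if r ≤ 3 * n - m then 0 else -muC (3 * n) m (6 * n - r)

def wI (n m r : ℕ) : ℕ := if r < n + m then 2 * n - r else r

def wJ (n m r : ℕ) : ℕ :=
  if r < n + m then r else if r ≤ 3 * n - m then r else 6 * n - r

lemma wav_eq (n m r : ℕ) (x : ℝ) :
    wavPerp n m r x = wA n m r * chebP (wI n m r) x + wB n m r * chebP (wJ n m r) x := by
  unfold wavPerp wA wB wI wJ
  by_cases h1 : r < n + m
  · simp only [if_pos h1]
  · by_cases h2 : r ≤ 3 * n - m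
    · simp only [if_neg h1, if_pos h2]
      ring
    · simp only [if_neg h1, if_neg h2]
      ring

theorem wavPerp_orthogonal (n m : ℕ) (hm : 0 < m) (hmn : m < n)
    (r s : ℕ) (hr : r ∈ Finset.Icc n (3 * n - 1)) (hs : s ∈ Finset.Icc n (3 * n - 1)) :
    (∫ x in (-1 : ℝ)..1, wavPerp n m r x * wavPerp n m s x * chebW x) =
      if r = s then wavNuC n m r else 0 := by
  obtain ⟨hr1, hr2⟩ := Finset.mem_Icc.mp hr
  obtain ⟨hs1, hs2⟩ := Finset.mem_Icc.mp hs
  have hm0 : (m:ℝ) ≠ 0 := Nat.cast_ne_zero.mpr hm.ne'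
  simp_rw [wav_eq]
  rw [integral_comb]
  rcases eq_or_ne r s with hrs | hrs
  · subst hrs
    rw [if_pos (rfl : wI n m r = wI n m r), if_pos (rfl : wJ n m r = wJ n m r),
      if_pos (rfl : r = r)]
    by_cases h1 : r < n + m
    · by_cases h0 : r = n
      · have e : wI n m r = wJ n m r := by
          unfold wI wJ; simp only [if_pos h1]; omega
        rw [if_pos e, if_pos e.symm]
        simp only [wA, wB, if_pos h1]
        rw [show 2 * n - r = r from by omega]
        simp only [muC, if_neg (show ¬ r ≤ n - m by omega), if_pos h1, wavNuC, if_pos h0]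
        have hc : (r:ℝ) = (n:ℝ) := by exact_mod_cast h0
        rw [hc]
        field_simp
        ring
      · have e : wI n m r ≠ wJ n m r := by
          unfold wI wJ; simp only [if_pos h1]; omega
        rw [if_neg e, if_neg (Ne.symm e)]
        simp only [wA, wB, if_pos h1]
        simp only [muC, if_neg (show ¬ r ≤ n - m by omega), if_pos h1,
          if_neg (show ¬ 2 * n - r ≤ n - m by omega),
          if_pos (show 2 * n - r < n + m by omega)]
        simp only [wavNuC, if_neg h0, if_pos h1]
        rw [Nat.cast_sub (show r ≤ 2 * n by omega)]
        push_cast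
        field_simp
        ring
    · by_cases h2 : r ≤ 3 * n - m
      · simp only [wA, wB, if_neg h1, if_pos h2, wavNuC,
          if_neg (show r ≠ n by omega), if_neg h1]
        ring
      · have e : wI n m r ≠ wJ n m r := by
          unfold wI wJ; simp only [if_neg h1, if_neg h2]; omega
        rw [if_neg e, if_neg (Ne.symm e)]
        simp only [wA, wB, if_neg h1, if_neg h2]
        simp only [muC, if_neg (show ¬ r ≤ 3 * n - m by omega),
          if_pos (show r < 3 * n + m by omega),
          if_neg (show ¬ 6 * n - r ≤ 3 * n - m by omega),
          if_pos (show 6 * n - r < 3 * n + m by omega)]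
        simp only [wavNuC, if_neg (show r ≠ n by omega),
          if_neg (show ¬ r < n + m by omega), if_neg h2]
        rw [Nat.cast_sub (show r ≤ 6 * n by omega)]
        push_cast
        field_simp
        ring
  · have keyne : wI n m r ≠ wI n m s ∧ wI n m r ≠ wJ n m s ∧ wJ n m r ≠ wI n m s ∧
        wJ n m r ≠ wJ n m s := by
      unfold wI wJ
      refine ⟨?_, ?_, ?_, ?_⟩ <;> split_ifs <;> omega
    obtain ⟨e1, e2, e3, e4⟩ := keyne
    rw [if_neg e1, if_neg e2, if_neg e3, if_neg e4, if_neg hrs]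
    ring
end

section
/- For all integers n, m with 0 < m < n, every k = 1,…,n and every x ∈ [−1,1], the scaling functions satisfy the two-scale relation Φ_{n,k}^m(x) = (π/(3n))·v_{3n}^m(x_k^n, x) + Σ_{h=1}^{2n} Φ_{n,k}^m(y_h^n)·(π/(3n))·v_{3n}^m(y_h^n, x). -/
open Real MeasureTheory Finset

noncomputable def ang (N j : ℕ) : ℝ := (2 * (j:ℝ) - 1) * π / (2 * (N:ℝ))

lemma chebNode_eq (N j : ℕ) : chebNode N j = Real.cos (ang N j) := rfl

lemma tel1 (α : ℝ) (N : ℕ) :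
    (∑ i ∈ range N, Real.cos ((2 * (i:ℝ) + 1) * α)) * (2 * Real.sin α)
      = Real.sin (2 * (N:ℝ) * α) := by
  have h : ∀ i : ℕ, Real.cos ((2 * (i:ℝ) + 1) * α) * (2 * Real.sin α)
      = Real.sin (2 * ((i:ℝ)+1) * α) - Real.sin (2 * (i:ℝ) * α) := by
    intro i
    have e1 : 2 * ((i:ℝ)+1) * α = (2 * (i:ℝ) + 1) * α + α := by ring
    have e2 : 2 * (i:ℝ) * α = (2 * (i:ℝ) + 1) * α - α := by ring
    rw [e1, e2, Real.sin_add, Real.sin_sub]; ring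
  rw [Finset.sum_mul]
  simp_rw [h]
  have := Finset.sum_range_sub (fun i => Real.sin (2 * (i:ℝ) * α)) N
  simp only [Nat.cast_add, Nat.cast_one] at this
  rw [this]
  simp

lemma quad0 (N s : ℕ) (hN : 0 < N) (hs : 0 < s) (hs2 : s < 2 * N) :
    ∑ j ∈ Icc 1 N, Real.cos ((s:ℝ) * ((2 * (j:ℝ) - 1) * π / (2 * N))) = 0 := by
  set α := (s:ℝ) * π / (2 * N) with hα
  have hNR : (0:ℝ) < N := by exact_mod_cast hN
  have hαpos : 0 < α := by positivity
  have hαlt : α < π := by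
    rw [hα, div_lt_iff₀ (by positivity)]
    rw [mul_comm π (2*(N:ℝ))]
    apply mul_lt_mul_of_pos_right _ Real.pi_pos
    exact_mod_cast hs2
  have hsin : Real.sin α ≠ 0 := ne_of_gt (Real.sin_pos_of_pos_of_lt_pi hαpos hαlt)
  have key : (∑ j ∈ Icc 1 N, Real.cos ((s:ℝ) * ((2 * (j:ℝ) - 1) * π / (2 * N)))) * (2 * Real.sin α) = 0 := by
    have hre : ∑ j ∈ Icc 1 N, Real.cos ((s:ℝ) * ((2 * (j:ℝ) - 1) * π / (2 * N)))
        = ∑ i ∈ range N, Real.cos ((2 * (i:ℝ) + 1) * α) := by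
      rw [← Finset.Ico_add_one_right_eq_Icc, Finset.sum_Ico_eq_sum_range]
      apply Finset.sum_congr rfl
      intro i _
      congr 1
      rw [hα]
      push_cast
      field_simp
      ring
    rw [hre, tel1]
    have : 2 * (N:ℝ) * α = (s:ℝ) * π := by rw [hα]; field_simp
    rw [this, Real.sin_nat_mul_pi]
  have h2 : (2 * Real.sin α) ≠ 0 := by positivity
  exact (mul_eq_zero.mp key).resolve_right h2

lemma quad0' (N s : ℕ) (hN : 0 < N) (hs : 0 < s) (hs2 : s < 2 * N) :
    ∑ j ∈ Icc 1 N, Real.cos ((s:ℝ) * ang N j) = 0 := quad0 N s hN hs hs2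

lemma ang_mem (N j : ℕ) (h1 : 1 ≤ j) (h2 : j ≤ N) : 0 ≤ ang N j ∧ ang N j ≤ π := by
  have hN : (0:ℝ) < N := by
    have : 0 < N := lt_of_lt_of_le h1 h2
    exact_mod_cast this
  unfold ang
  constructor
  · apply div_nonneg _ (by positivity)
    apply mul_nonneg _ Real.pi_pos.le
    have : (1:ℝ) ≤ (j:ℝ) := by exact_mod_cast h1
    linarith
  · rw [div_le_iff₀ (by positivity)]
    have : (j:ℝ) ≤ (N:ℝ) := by exact_mod_cast h2
    nlinarith [Real.pi_pos]

lemma chebP_node (s N j : ℕ) (h1 : 1 ≤ j) (h2 : j ≤ N) :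
    chebP s (chebNode N j)
      = (if s = 0 then Real.sqrt (1/π) else Real.sqrt (2/π)) * Real.cos ((s:ℝ) * ang N j) := by
  obtain ⟨ha, hb⟩ := ang_mem N j h1 h2
  rcases Nat.eq_zero_or_pos s with hs | hs
  · subst hs; simp [chebP]
  · rw [chebNode_eq, chebP, if_neg (Nat.pos_iff_ne_zero.mp hs),
      if_neg (Nat.pos_iff_ne_zero.mp hs), Real.arccos_cos ha hb]

lemma quadCC' (N s u : ℕ) (hN : 0 < N) (hsu : s + u < 2 * N) (hus : u ≤ s) :
    ∑ j ∈ Icc 1 N, Real.cos ((s:ℝ) * ang N j) * Real.cos ((u:ℝ) * ang N j)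
      = if s = u then (if s = 0 then (N:ℝ) else (N:ℝ)/2) else 0 := by
  have hterm : ∀ j, Real.cos ((s:ℝ) * ang N j) * Real.cos ((u:ℝ) * ang N j)
      = (Real.cos (((s+u:ℕ):ℝ) * ang N j) + Real.cos (((s-u:ℕ):ℝ) * ang N j)) / 2 := by
    intro j
    have e1 : ((s+u:ℕ):ℝ) * ang N j = (s:ℝ) * ang N j + (u:ℝ) * ang N j := by push_cast; ring
    have e2 : ((s-u:ℕ):ℝ) * ang N j = (s:ℝ) * ang N j - (u:ℝ) * ang N j := by
      rw [Nat.cast_sub hus]; ring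
    rw [e1, e2, Real.cos_add, Real.cos_sub]; ring
  simp_rw [hterm]
  rw [← Finset.sum_div, Finset.sum_add_distrib]
  rcases Nat.eq_zero_or_pos s with hs0 | hs0
  · have hu0 : u = 0 := by omega
    subst hs0; subst hu0
    simp [Nat.card_Icc]
  · have h1 : ∑ j ∈ Icc 1 N, Real.cos (((s+u:ℕ):ℝ) * ang N j) = 0 :=
      quad0' N (s+u) hN (by omega) hsu
    rw [h1]
    by_cases hse : s = u
    · subst hse
      simp only [Nat.sub_self, Nat.cast_zero, zero_mul, Real.cos_zero]
      rw [Finset.sum_const, Nat.card_Icc]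
      simp [Nat.pos_iff_ne_zero.mp hs0]
    · have h2 : ∑ j ∈ Icc 1 N, Real.cos (((s-u:ℕ):ℝ) * ang N j) = 0 :=
        quad0' N (s-u) hN (by omega) (by omega)
      rw [h2, if_neg hse]
      norm_num

lemma quadCC (N s u : ℕ) (hN : 0 < N) (hsu : s + u < 2 * N) :
    ∑ j ∈ Icc 1 N, Real.cos ((s:ℝ) * ang N j) * Real.cos ((u:ℝ) * ang N j)
      = if s = u then (if s = 0 then (N:ℝ) else (N:ℝ)/2) else 0 := by
  rcases le_total u s with h | h
  · exact quadCC' N s u hN hsu h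
  · have := quadCC' N u s hN (by omega) h
    simp_rw [mul_comm (Real.cos ((u:ℝ) * ang N _))] at this
    rw [this]
    by_cases hse : s = u
    · subst hse; rfl
    · rw [if_neg hse, if_neg (Ne.symm hse)]

lemma orthoNode (N s u : ℕ) (hN : 0 < N) (hsu : s + u < 2 * N) :
    ∑ j ∈ Icc 1 N, chebP s (chebNode N j) * chebP u (chebNode N j)
      = if s = u then (N:ℝ)/π else 0 := by
  have hre : ∑ j ∈ Icc 1 N, chebP s (chebNode N j) * chebP u (chebNode N j)
      = ((if s = 0 then Real.sqrt (1/π) else Real.sqrt (2/π)) *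
          (if u = 0 then Real.sqrt (1/π) else Real.sqrt (2/π))) *
        ∑ j ∈ Icc 1 N, Real.cos ((s:ℝ) * ang N j) * Real.cos ((u:ℝ) * ang N j) := by
    rw [Finset.mul_sum]
    apply Finset.sum_congr rfl
    intro j hj
    rw [Finset.mem_Icc] at hj
    rw [chebP_node s N j hj.1 hj.2, chebP_node u N j hj.1 hj.2]
    ring
  rw [hre, quadCC N s u hN hsu]
  by_cases hse : s = u
  · subst hse
    rw [if_pos rfl, if_pos rfl]
    by_cases hs0 : s = 0
    · simp only [if_pos hs0, Real.mul_self_sqrt (show (0:ℝ) ≤ 1/π by positivity)]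
      ring
    · simp only [if_neg hs0, Real.mul_self_sqrt (show (0:ℝ) ≤ 2/π by positivity)]
      ring
  · rw [if_neg hse, if_neg hse, mul_zero]

lemma dirich (β : ℝ) (r : ℕ) :
    (∑ s ∈ Icc 1 r, Real.cos ((s:ℝ) * β)) * (2 * Real.sin (β/2))
      = Real.sin (((r:ℝ) + 1/2) * β) - Real.sin (β/2) := by
  rw [← Finset.Ico_add_one_right_eq_Icc, Finset.sum_Ico_eq_sum_range, Finset.sum_mul]
  have h : ∀ i : ℕ, Real.cos (((1+i:ℕ):ℝ) * β) * (2 * Real.sin (β/2))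
      = Real.sin (((i:ℝ)+1+1/2) * β) - Real.sin (((i:ℝ)+1/2) * β) := by
    intro i
    have e1 : ((i:ℝ)+1+1/2) * β = ((1+i:ℕ):ℝ) * β + β/2 := by push_cast; ring
    have e2 : ((i:ℝ)+1/2) * β = ((1+i:ℕ):ℝ) * β - β/2 := by push_cast; ring
    rw [e1, e2, Real.sin_add, Real.sin_sub]; ring
  simp_rw [h]
  have := Finset.sum_range_sub (fun i => Real.sin (((i:ℝ)+1/2) * β)) (r+1-1)
  simp only [Nat.cast_add, Nat.cast_one] at this
  rw [this]
  norm_num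
  ring_nf

lemma pairsum (β : ℝ) (n m : ℕ) (hm : 0 < m) (hmn : m ≤ n) :
    (∑ r ∈ Icc (n-m) (n+m-1), Real.sin (((r:ℝ) + 1/2) * β)) * (2 * Real.sin (β/2))
      = Real.cos (((n:ℝ)-m) * β) - Real.cos (((n:ℝ)+m) * β) := by
  rw [← Finset.Ico_add_one_right_eq_Icc, Finset.sum_Ico_eq_sum_range, Finset.sum_mul]
  have hcard : n + m - 1 + 1 - (n - m) = 2 * m := by omega
  rw [hcard]
  have h : ∀ i : ℕ, Real.sin ((((n-m+i:ℕ):ℝ) + 1/2) * β) * (2 * Real.sin (β/2))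
      = Real.cos ((((n:ℝ)-m) + i) * β) - Real.cos ((((n:ℝ)-m) + (i+1)) * β) := by
    intro i
    have hc : ((n-m+i:ℕ):ℝ) = ((n:ℝ)-m) + i := by
      push_cast [Nat.cast_sub hmn]; ring
    have e1 : (((n:ℝ)-m) + i) * β = (((n-m+i:ℕ):ℝ) + 1/2) * β - β/2 := by rw [hc]; ring
    have e2 : (((n:ℝ)-m) + (i+1)) * β = (((n-m+i:ℕ):ℝ) + 1/2) * β + β/2 := by rw [hc]; ring
    rw [e1, e2, Real.cos_add, Real.cos_sub]; ring
  simp_rw [h]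
  have := Finset.sum_range_sub' (fun i => Real.cos ((((n:ℝ)-m) + i) * β)) (2*m)
  simp only [Nat.cast_add, Nat.cast_one] at this
  rw [this]
  have : ((n:ℝ)-m) + ((2*m:ℕ):ℝ) = (n:ℝ) + m := by push_cast; ring
  rw [this]
  norm_num

lemma Tlem (β : ℝ) (n m : ℕ) (hm : 0 < m) (hmn : m ≤ n)
    (h0 : Real.sin (β/2) ≠ 0) (hn : Real.sin ((n:ℝ) * β) = 0) :
    ∑ r ∈ Icc (n-m) (n+m-1), ∑ s ∈ Icc 1 r, Real.cos ((s:ℝ) * β) = -(m:ℝ) := by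
  set D := 2 * Real.sin (β/2) with hD
  have hD0 : D ≠ 0 := by simp [hD, h0]
  have key : (∑ r ∈ Icc (n-m) (n+m-1), ∑ s ∈ Icc 1 r, Real.cos ((s:ℝ) * β)) * (D * D)
      = (-(m:ℝ)) * (D * D) := by
    have step1 : (∑ r ∈ Icc (n-m) (n+m-1), ∑ s ∈ Icc 1 r, Real.cos ((s:ℝ) * β)) * D
        = (∑ r ∈ Icc (n-m) (n+m-1), Real.sin (((r:ℝ) + 1/2) * β)) - (2*m) * Real.sin (β/2) := by
      rw [Finset.sum_mul]
      have : ∀ r ∈ Icc (n-m) (n+m-1), (∑ s ∈ Icc 1 r, Real.cos ((s:ℝ) * β)) * D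
          = Real.sin (((r:ℝ) + 1/2) * β) - Real.sin (β/2) := fun r _ => dirich β r
      rw [Finset.sum_congr rfl this, Finset.sum_sub_distrib, Finset.sum_const, Nat.card_Icc]
      have hc : n + m - 1 + 1 - (n - m) = 2 * m := by omega
      rw [hc]
      push_cast
      ring
    have step2 : ((∑ r ∈ Icc (n-m) (n+m-1), Real.sin (((r:ℝ) + 1/2) * β)) - (2*m) * Real.sin (β/2)) * D
        = (-(m:ℝ)) * (D * D) := by
      rw [sub_mul, pairsum β n m hm hmn]
      have hcc : Real.cos (((n:ℝ)-m) * β) - Real.cos (((n:ℝ)+m) * β)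
          = 2 * Real.sin ((n:ℝ)*β) * Real.sin ((m:ℝ)*β) := by
        have e1 : ((n:ℝ)-m) * β = (n:ℝ)*β - (m:ℝ)*β := by ring
        have e2 : ((n:ℝ)+m) * β = (n:ℝ)*β + (m:ℝ)*β := by ring
        rw [e1, e2, Real.cos_sub, Real.cos_add]; ring
      rw [hcc, hn]
      rw [hD]
      ring
    calc (∑ r ∈ Icc (n-m) (n+m-1), ∑ s ∈ Icc 1 r, Real.cos ((s:ℝ) * β)) * (D * D)
        = ((∑ r ∈ Icc (n-m) (n+m-1), ∑ s ∈ Icc 1 r, Real.cos ((s:ℝ) * β)) * D) * D := by ring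
      _ = (-(m:ℝ)) * (D * D) := by rw [step1, step2]
  exact mul_right_cancel₀ (mul_ne_zero hD0 hD0) key

lemma rangesplit (r : ℕ) (f : ℕ → ℝ) :
    ∑ s ∈ range (r+1), f s = f 0 + ∑ s ∈ Icc 1 r, f s := by
  have h : range (r+1) = insert 0 (Icc 1 r) := by
    ext a; simp [Nat.lt_succ_iff]; omega
  rw [h, Finset.sum_insert (by simp)]

lemma sinq_ne (n q : ℕ) (hq1 : 0 < q) (hq2 : q < 2*n) : Real.sin ((q:ℝ) * π / (2*n)) ≠ 0 := by
  have hn : (0:ℝ) < n := by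
    have : 0 < n := by omega
    exact_mod_cast this
  apply ne_of_gt
  apply Real.sin_pos_of_pos_of_lt_pi
  · have : (0:ℝ) < q := by exact_mod_cast hq1
    positivity
  · rw [div_lt_iff₀ (by positivity), mul_comm π (2*(n:ℝ))]
    apply mul_lt_mul_of_pos_right _ Real.pi_pos
    exact_mod_cast hq2

lemma gaussIcc (n m : ℕ) (hm : 0 < m) (hmn : m ≤ n) :
    ∑ r ∈ Icc (n-m) (n+m-1), ((r:ℕ):ℝ) = 2*(m:ℝ)*(n:ℝ) - m := by
  rw [← Finset.Ico_add_one_right_eq_Icc, Finset.sum_Ico_eq_sum_range]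
  have hc : n + m - 1 + 1 - (n - m) = 2 * m := by omega
  rw [hc]
  have h1 : ∀ i ∈ range (2*m), ((n - m + i : ℕ):ℝ) = ((n:ℝ) - m) + i := by
    intro i _; push_cast [Nat.cast_sub hmn]; ring
  rw [Finset.sum_congr rfl h1, Finset.sum_add_distrib, Finset.sum_const]
  have h2 : (∑ i ∈ range (2*m), ((i:ℕ):ℝ)) = (2*m)*(2*m-1)/2 := by
    have := Finset.sum_range_id_mul_two (2*m)
    have h3 : ((∑ i ∈ range (2*m), i) * 2 : ℕ) = ((2*m) * (2*m-1) : ℕ) := this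
    have h4 : (((∑ i ∈ range (2*m), i) * 2 : ℕ):ℝ) = (((2*m) * (2*m-1) : ℕ):ℝ) := by
      exact_mod_cast h3
    push_cast [Nat.cast_sub (by omega : 1 ≤ 2*m)] at h4
    linarith
  rw [h2]
  simp only [card_range, nsmul_eq_mul]
  push_cast
  ring

lemma deltaLem (n m k i : ℕ) (hm : 0 < m) (hmn : m < n)
    (hk1 : 1 ≤ k) (hk2 : k ≤ n) (hi1 : 1 ≤ i) (hi2 : i ≤ n) :
    vpK n m (chebNode n k) (chebNode n i) = if k = i then (n:ℝ)/π else 0 := by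
  have hn0 : (0:ℝ) < n := by
    have : 0 < n := by omega
    exact_mod_cast this
  set βp : ℝ := ((k:ℝ) + i - 1) * π / n with hβp
  set βm : ℝ := ((k:ℝ) - i) * π / n with hβm
  have hang : ∀ s : ℕ, Real.cos ((s:ℝ) * ang n k) * Real.cos ((s:ℝ) * ang n i)
      = (Real.cos ((s:ℝ) * βp) + Real.cos ((s:ℝ) * βm)) / 2 := by
    intro s
    have e1 : (s:ℝ) * βp = (s:ℝ) * ang n k + (s:ℝ) * ang n i := by
      rw [hβp]; unfold ang; field_simp; ring
    have e2 : (s:ℝ) * βm = (s:ℝ) * ang n k - (s:ℝ) * ang n i := by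
      rw [hβm]; unfold ang; field_simp; ring
    rw [e1, e2, Real.cos_add, Real.cos_sub]; ring
  have hdar : ∀ r : ℕ, darboux r (chebNode n k) (chebNode n i)
      = 1/π + (1/π) * ((∑ s ∈ Icc 1 r, Real.cos ((s:ℝ) * βp))
          + (∑ s ∈ Icc 1 r, Real.cos ((s:ℝ) * βm))) := by
    intro r
    unfold darboux
    rw [rangesplit]
    have h0 : chebP 0 (chebNode n k) * chebP 0 (chebNode n i) = 1/π := by
      have e : ∀ t : ℝ, chebP 0 t = Real.sqrt (1/π) := fun t => by simp [chebP]
      rw [e, e]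
      exact Real.mul_self_sqrt (by positivity)
    rw [h0]
    congr 1
    have hs : ∀ s ∈ Icc 1 r, chebP s (chebNode n k) * chebP s (chebNode n i)
        = (1/π) * (Real.cos ((s:ℝ) * βp) + Real.cos ((s:ℝ) * βm)) := by
      intro s hs
      rw [Finset.mem_Icc] at hs
      have hs0 : s ≠ 0 := by omega
      rw [chebP_node s n k hk1 hk2, chebP_node s n i hi1 hi2,
        if_neg hs0]
      have hsq : Real.sqrt (2/π) * Real.sqrt (2/π) = 2/π :=
        Real.mul_self_sqrt (by positivity)
      have : Real.sqrt (2/π) * Real.cos ((s:ℝ) * ang n k) * (Real.sqrt (2/π) * Real.cos ((s:ℝ) * ang n i))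
          = (2/π) * (Real.cos ((s:ℝ) * ang n k) * Real.cos ((s:ℝ) * ang n i)) := by
        linear_combination (Real.cos ((s:ℝ) * ang n k) * Real.cos ((s:ℝ) * ang n i)) * hsq
      rw [this, hang s]
      ring
    rw [Finset.sum_congr rfl hs, ← Finset.mul_sum, Finset.sum_add_distrib]
  unfold vpK
  rw [Finset.sum_congr rfl (fun r _ => hdar r), Finset.sum_add_distrib,
    Finset.sum_const, Nat.card_Icc, ← Finset.mul_sum, Finset.sum_add_distrib]
  have hcard : n + m - 1 + 1 - (n - m) = 2*m := by omega
  rw [hcard]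
  have hTp : ∑ r ∈ Icc (n-m) (n+m-1), ∑ s ∈ Icc 1 r, Real.cos ((s:ℝ) * βp) = -(m:ℝ) := by
    apply Tlem βp n m hm (le_of_lt hmn)
    · have : βp / 2 = ((k+i-1:ℕ):ℝ) * π / (2*n) := by
        rw [hβp]; push_cast [Nat.cast_sub (by omega : 1 ≤ k + i)]; ring
      rw [this]
      exact sinq_ne n (k+i-1) (by omega) (by omega)
    · have : (n:ℝ) * βp = ((k+i-1:ℕ):ℝ) * π := by
        rw [hβp]; push_cast [Nat.cast_sub (by omega : 1 ≤ k + i)]; field_simp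
      rw [this, Real.sin_nat_mul_pi]
  rw [hTp]
  by_cases hki : k = i
  · subst hki
    have hbm0 : βm = 0 := by rw [hβm]; ring
    have hTm : ∑ r ∈ Icc (n-m) (n+m-1), ∑ s ∈ Icc 1 r, Real.cos ((s:ℝ) * βm)
        = 2*(m:ℝ)*(n:ℝ) - m := by
      rw [← gaussIcc n m hm (le_of_lt hmn)]
      apply Finset.sum_congr rfl
      intro r _
      rw [hbm0]
      simp
    rw [hTm, if_pos rfl]
    have hm0 : (m:ℝ) ≠ 0 := by
      have : 0 < m := hm
      positivity
    field_simp
    ring_nf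
    rw [mul_inv_cancel₀ Real.pi_ne_zero]
    ring
  · have hTm : ∑ r ∈ Icc (n-m) (n+m-1), ∑ s ∈ Icc 1 r, Real.cos ((s:ℝ) * βm) = -(m:ℝ) := by
    
      apply Tlem βm n m hm (le_of_lt hmn)
      · have hrw : βm / 2 = ((k:ℝ)-i) * π / (2*n) := by rw [hβm]; ring
        rw [hrw]
        have hk' : (1:ℝ) ≤ (k:ℝ) := by exact_mod_cast hk1
        have hk'' : (k:ℝ) ≤ n := by exact_mod_cast hk2
        have hi' : (1:ℝ) ≤ (i:ℝ) := by exact_mod_cast hi1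
        have hi'' : (i:ℝ) ≤ n := by exact_mod_cast hi2
        have habs : |(k:ℝ) - i| ≤ (n:ℝ) - 1 := by
          rw [abs_le]; constructor <;> linarith
        have hb : |((k:ℝ)-i) * π / (2*(n:ℝ))| < π := by
          rw [abs_div, abs_mul, abs_of_pos Real.pi_pos,
            abs_of_pos (show (0:ℝ) < 2*(n:ℝ) by positivity),
            div_lt_iff₀ (by positivity)]
          nlinarith [Real.pi_pos]
        rw [Ne, Real.sin_eq_zero_iff_of_lt_of_lt (abs_lt.mp hb).1 (abs_lt.mp hb).2]
        intro hc
        rw [div_eq_zero_iff] at hc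
        rcases hc with hc | hc
        · rcases mul_eq_zero.mp hc with h | h
          · exact hki (by exact_mod_cast sub_eq_zero.mp h)
          · exact absurd h Real.pi_ne_zero
        · have : (0:ℝ) < 2*(n:ℝ) := by positivity
          linarith
      · have : (n:ℝ) * βm = ((k:ℝ)-i) * π := by rw [hβm]; field_simp
        rw [this]
        have : (k:ℝ) - i = ((k:ℤ) - i : ℤ) := by push_cast; ring
        rw [this, Real.sin_int_mul_pi]
    rw [hTm, if_neg hki]
    ring

lemma sum_comm5 {J R1 R2 : Finset ℕ} (g1 g2 : ℕ → Finset ℕ) (F : ℕ → ℕ → ℕ → ℕ → ℕ → ℝ) :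
    ∑ j ∈ J, ∑ r ∈ R1, ∑ r' ∈ R2, ∑ s ∈ g1 r, ∑ s' ∈ g2 r', F j r r' s s'
      = ∑ r ∈ R1, ∑ r' ∈ R2, ∑ s ∈ g1 r, ∑ s' ∈ g2 r', ∑ j ∈ J, F j r r' s s' := by
  rw [Finset.sum_comm]
  refine Finset.sum_congr rfl fun r _ => ?_
  rw [Finset.sum_comm]
  refine Finset.sum_congr rfl fun r' _ => ?_
  rw [Finset.sum_comm]
  refine Finset.sum_congr rfl fun s _ => ?_
  rw [Finset.sum_comm]

lemma mainLem (n m : ℕ) (hm : 0 < m) (hmn : m < n) (a x : ℝ) :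
    ∑ j ∈ Icc 1 (3*n), vpK n m a (chebNode (3*n) j) * vpK (3*n) m (chebNode (3*n) j) x
      = (3*(n:ℝ)/π) * vpK n m a x := by
  have hmR : (0:ℝ) < m := by exact_mod_cast hm
  have h1 : ∑ j ∈ Icc 1 (3*n), vpK n m a (chebNode (3*n) j) * vpK (3*n) m (chebNode (3*n) j) x
      = (1/(2*(m:ℝ))) * (1/(2*(m:ℝ))) *
        ∑ j ∈ Icc 1 (3*n), ∑ r ∈ Icc (n-m) (n+m-1), ∑ r' ∈ Icc (3*n-m) (3*n+m-1),
          ∑ s ∈ range (r+1), ∑ s' ∈ range (r'+1),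
            (chebP s a * chebP s (chebNode (3*n) j)) *
              (chebP s' (chebNode (3*n) j) * chebP s' x) := by
    rw [Finset.mul_sum]
    apply Finset.sum_congr rfl
    intro j _
    unfold vpK darboux
    rw [mul_mul_mul_comm, Finset.sum_mul_sum]
    simp_rw [Finset.sum_mul_sum]
  rw [h1, sum_comm5]
  have h2 : ∀ r ∈ Icc (n-m) (n+m-1), ∀ r' ∈ Icc (3*n-m) (3*n+m-1), ∀ s ∈ range (r+1),
      ∑ s' ∈ range (r'+1), ∑ j ∈ Icc 1 (3*n),
        (chebP s a * chebP s (chebNode (3*n) j)) * (chebP s' (chebNode (3*n) j) * chebP s' x)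
      = chebP s a * chebP s x * (3*(n:ℝ)/π) := by
    intro r hr r' hr' s hs
    rw [Finset.mem_Icc] at hr hr'
    rw [Finset.mem_range] at hs
    have hsb : s ≤ n + m - 1 := by omega
    have h3 : ∀ s' ∈ range (r'+1), ∑ j ∈ Icc 1 (3*n),
        (chebP s a * chebP s (chebNode (3*n) j)) * (chebP s' (chebNode (3*n) j) * chebP s' x)
        = (chebP s a * chebP s' x) * (if s = s' then 3*(n:ℝ)/π else 0) := by
      intro s' hs'
      rw [Finset.mem_range] at hs'
      have : ∑ j ∈ Icc 1 (3*n),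
          (chebP s a * chebP s (chebNode (3*n) j)) * (chebP s' (chebNode (3*n) j) * chebP s' x)
          = (chebP s a * chebP s' x) *
            ∑ j ∈ Icc 1 (3*n), chebP s (chebNode (3*n) j) * chebP s' (chebNode (3*n) j) := by
        rw [Finset.mul_sum]
        apply Finset.sum_congr rfl
        intro j _
        ring
      rw [this, orthoNode (3*n) s s' (by omega) (by omega)]
      norm_num
    rw [Finset.sum_congr rfl h3]
    simp_rw [mul_ite, mul_zero]
    rw [Finset.sum_ite_eq (range (r'+1)) s (fun s' => chebP s a * chebP s' x * (3*(n:ℝ)/π))]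
    rw [if_pos (by rw [Finset.mem_range]; omega)]
  have h4 : ∑ r ∈ Icc (n-m) (n+m-1), ∑ r' ∈ Icc (3*n-m) (3*n+m-1), ∑ s ∈ range (r+1),
      ∑ s' ∈ range (r'+1), ∑ j ∈ Icc 1 (3*n),
        (chebP s a * chebP s (chebNode (3*n) j)) * (chebP s' (chebNode (3*n) j) * chebP s' x)
      = ∑ r ∈ Icc (n-m) (n+m-1), ∑ r' ∈ Icc (3*n-m) (3*n+m-1), ∑ s ∈ range (r+1),
          chebP s a * chebP s x * (3*(n:ℝ)/π) := by
    refine Finset.sum_congr rfl fun r hr => Finset.sum_congr rfl fun r' hr' =>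
      Finset.sum_congr rfl fun s hs => h2 r hr r' hr' s hs
  rw [h4]
  have hcard : (Icc (3*n-m) (3*n+m-1)).card = 2*m := by
    rw [Nat.card_Icc]; omega
  have h5 : ∑ r ∈ Icc (n-m) (n+m-1), ∑ r' ∈ Icc (3*n-m) (3*n+m-1), ∑ s ∈ range (r+1),
      chebP s a * chebP s x * (3*(n:ℝ)/π)
      = (2*(m:ℝ)) * ∑ r ∈ Icc (n-m) (n+m-1), ∑ s ∈ range (r+1),
          chebP s a * chebP s x * (3*(n:ℝ)/π) := by
    rw [Finset.mul_sum]
    refine Finset.sum_congr rfl fun r _ => ?_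
    rw [Finset.sum_const, hcard]
    push_cast
    ring
  rw [h5]
  unfold vpK darboux
  simp_rw [← Finset.sum_mul]
  field_simp

lemma sum_tri (f : ℕ → ℝ) (n : ℕ) :
    ∑ j ∈ Icc 1 (3*n), f j = ∑ i ∈ Icc 1 n, (f (3*i-2) + f (3*i-1) + f (3*i)) := by
  induction n with
  | zero => simp
  | succ n ih =>
    have h3 : 3*(n+1) = (3*n+2)+1 := by ring
    have h2 : 3*n+2 = (3*n+1)+1 := by ring
    have h1' : 3*n+1 = (3*n)+1 := rfl
    rw [h3, Finset.sum_Icc_succ_top (by omega), h2,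
      Finset.sum_Icc_succ_top (by omega), h1', Finset.sum_Icc_succ_top (by omega), ih,
      Finset.sum_Icc_succ_top (by omega : 1 ≤ n + 1)]
    have e1 : 3*(n+1)-2 = 3*n+1 := by omega
    have e2 : 3*(n+1)-1 = 3*n+2 := by omega
    have e3 : 3*(n+1) = 3*n+3 := by omega
    rw [e1, e2, e3, show 3*n+1+1 = 3*n+2 by omega, show 3*n+1+1+1 = 3*n+3 by omega]
    ring

lemma sum_two (g : ℕ → ℝ) (n : ℕ) :
    ∑ h ∈ Icc 1 (2*n), g h = ∑ i ∈ Icc 1 n, (g (2*i-1) + g (2*i)) := by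
  induction n with
  | zero => simp
  | succ n ih =>
    have h2 : 2*(n+1) = (2*n+1)+1 := by ring
    rw [h2, Finset.sum_Icc_succ_top (by omega), show 2*n+1 = (2*n)+1 from rfl,
      Finset.sum_Icc_succ_top (by omega), ih,
      Finset.sum_Icc_succ_top (by omega : 1 ≤ n + 1)]
    have e1 : 2*(n+1)-1 = 2*n+1 := by omega
    have e2 : 2*(n+1) = 2*n+2 := by omega
    rw [e1, e2, show 2*n+1+1 = 2*n+2 by omega]
    ring

lemma nodeMid (n i : ℕ) (hn : 0 < n) (hi : 1 ≤ i) :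
    chebNode (3*n) (3*i-1) = chebNode n i := by
  unfold chebNode
  congr 1
  have hc : ((3*i-1:ℕ):ℝ) = 3*(i:ℝ) - 1 := by
    push_cast [Nat.cast_sub (by omega : 1 ≤ 3*i)]; ring
  rw [hc]
  have hn' : ((n:ℝ)) ≠ 0 := by
    have : (0:ℝ) < n := by exact_mod_cast hn
    linarith
  push_cast
  field_simp
  ring

theorem scal_two_scale_relation (n m : ℕ) (hm : 0 < m) (hmn : m < n)
    (k : ℕ) (hk : k ∈ Finset.Icc 1 n) (x : ℝ) (hx : x ∈ Set.Icc (-1 : ℝ) 1) :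
    scal n m k x =
      (Real.pi / (3 * (n : ℝ))) * vpK (3 * n) m (chebNode n k) x +
        ∑ h ∈ Finset.Icc 1 (2 * n),
          scal n m k (yNode n h) * ((Real.pi / (3 * (n : ℝ))) * vpK (3 * n) m (yNode n h) x) := by
  rw [Finset.mem_Icc] at hk
  obtain ⟨hk1, hk2⟩ := hk
  have hn : 0 < n := by omega
  have hnR : (0:ℝ) < n := by exact_mod_cast hn
  set f : ℕ → ℝ := fun j =>
    scal n m k (chebNode (3*n) j) * ((Real.pi / (3 * (n : ℝ))) * vpK (3 * n) m (chebNode (3*n) j) x)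
    with hf
  have hS : ∑ j ∈ Icc 1 (3*n), f j = scal n m k x := by
    have he : ∀ j, f j = ((π/(n:ℝ)) * (π / (3 * (n:ℝ)))) *
        (vpK n m (chebNode n k) (chebNode (3*n) j) * vpK (3*n) m (chebNode (3*n) j) x) := by
      intro j; rw [hf]; unfold scal; ring
    rw [Finset.sum_congr rfl (fun j _ => he j), ← Finset.mul_sum,
      mainLem n m hm hmn (chebNode n k) x]
    unfold scal
    field_simp
  rw [← hS, sum_tri]
  have hdelta : ∀ i : ℕ, 1 ≤ i → i ≤ n →
      scal n m k (chebNode n i) = if k = i then 1 else 0 := by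
    intro i h1 h2
    unfold scal
    rw [deltaLem n m k i hm hmn hk1 hk2 h1 h2]
    by_cases hki : k = i
    · rw [if_pos hki, if_pos hki]
      field_simp
    · rw [if_neg hki, if_neg hki, mul_zero]
  have hterm : ∀ i ∈ Icc 1 n, f (3*i-2) + f (3*i-1) + f (3*i)
      = (scal n m k (yNode n (2*i-1)) * ((Real.pi / (3 * (n : ℝ))) * vpK (3 * n) m (yNode n (2*i-1)) x)
        + scal n m k (yNode n (2*i)) * ((Real.pi / (3 * (n : ℝ))) * vpK (3 * n) m (yNode n (2*i)) x))
        + (if k = i then 1 else 0) * ((Real.pi / (3 * (n : ℝ))) * vpK (3 * n) m (chebNode n i) x) := by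
    intro i hi
    rw [Finset.mem_Icc] at hi
    have hy1 : yNode n (2*i-1) = chebNode (3*n) (3*i-2) := by
      unfold yNode; congr 1; omega
    have hy2 : yNode n (2*i) = chebNode (3*n) (3*i) := by
      unfold yNode; congr 1; omega
    rw [hf]
    simp only []
    rw [hy1, hy2, nodeMid n i hn hi.1, hdelta i hi.1 hi.2]
    ring
  rw [Finset.sum_congr rfl hterm, Finset.sum_add_distrib]
  have hite : ∑ i ∈ Icc 1 n, (if k = i then 1 else 0) * ((Real.pi / (3 * (n : ℝ))) * vpK (3 * n) m (chebNode n i) x)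
      = (Real.pi / (3 * (n : ℝ))) * vpK (3 * n) m (chebNode n k) x := by
    simp_rw [ite_mul, one_mul, zero_mul]
    rw [Finset.sum_ite_eq (Icc 1 n) k
      (fun i => (Real.pi / (3 * (n : ℝ))) * vpK (3 * n) m (chebNode n i) x)]
    rw [if_pos (by rw [Finset.mem_Icc]; exact ⟨hk1, hk2⟩)]
  rw [hite, ← sum_two (fun h =>
    scal n m k (yNode n h) * ((Real.pi / (3 * (n : ℝ))) * vpK (3 * n) m (yNode n h) x)) n]
  ring
end
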